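/- (Massart's finite class lemma) If A ⊆ ℝ^n is a finite set with |A| = K and max_{a∈A} ‖a‖_2 ≤ R, then E_σ[max_{a∈A} Σ_{i=1}^n σ_i a_i] ≤ R·sqrt(2 log K), where σ_i are i.i.d. uniform ±1 random variables. -/

import Mathlib

/-!
For `l > 0`, Jensen's inequality and bounding a maximum of positive terms by their sum give
`exp (l 𝔼[max_a ⟨σ, a⟩]) ≤ 𝔼[exp (l max_a ⟨σ, a⟩)] ≤ ∑_a 𝔼[exp (l ⟨σ, a⟩)]`, and by independence each
term is `∏ᵢ cosh (l aᵢ) ≤ exp (l² R² / 2)`. Taking logarithms, `𝔼[max] ≤ log K / l + l R² / 2`,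
which at `l = √(2 log K) / R` is `R √(2 log K)`.
-/

open Finset Real Filter Topology

section Rademacher

variable {ι : Type*} [Fintype ι] [DecidableEq ι]

theorem sum_exp_sum_sign_mul_eq_prod_cosh (x : ι → ℝ) :
    ∑ σ : ι → Bool, exp (∑ i, (if σ i then (1 : ℝ) else -1) * x i) = ∏ i, 2 * cosh (x i) := by
  simp only [exp_sum]
  rw [← Fintype.prod_sum (fun i (b : Bool) => exp ((if b then (1 : ℝ) else -1) * x i))]
  refine prod_congr rfl fun i _ => ?_
  rw [Fintype.sum_bool, cosh_eq]
  norm_num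
  ring

theorem sum_exp_sum_sign_mul_le (x : ι → ℝ) :
    ∑ σ : ι → Bool, exp (∑ i, (if σ i then (1 : ℝ) else -1) * x i)
      ≤ 2 ^ Fintype.card ι * exp ((∑ i, x i ^ 2) / 2) := by
  rw [sum_exp_sum_sign_mul_eq_prod_cosh, sum_div, exp_sum, ← card_univ, ← prod_const,
    ← prod_mul_distrib]
  exact prod_le_prod (fun i _ => by positivity) fun i _ => by
    gcongr; exact cosh_le_exp_half_sq (x i)

end Rademacher

theorem exp_sum_div_card_le {Ω : Type*} [Fintype Ω] [Nonempty Ω] (f : Ω → ℝ) :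
    exp ((∑ ω, f ω) / Fintype.card Ω) ≤ (∑ ω, exp (f ω)) / Fintype.card Ω := by
  have hcard : (0 : ℝ) < Fintype.card Ω := by exact_mod_cast Fintype.card_pos
  have h := convexOn_exp.map_sum_le (t := univ) (w := fun _ => (Fintype.card Ω : ℝ)⁻¹) (p := f)
    (fun _ _ => by positivity) (by simp [hcard.ne']) (fun _ _ => Set.mem_univ _)
  simp only [smul_eq_mul] at h
  rwa [← mul_sum, ← mul_sum, inv_mul_eq_div, inv_mul_eq_div] at h

theorem exp_mul_sup'_le_sum {α : Type*} (s : Finset α) (hs : s.Nonempty) (f : α → ℝ) (l : ℝ) :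
    exp (l * s.sup' hs f) ≤ ∑ a ∈ s, exp (l * f a) := by
  obtain ⟨b, hb, hmax⟩ := exists_mem_eq_sup' hs f
  rw [hmax]
  exact single_le_sum (f := fun a => exp (l * f a)) (fun _ _ => (exp_pos _).le) hb

theorem le_mul_sqrt_of_forall_le_div_add {x c σ : ℝ} (hc : 0 ≤ c) (hσ : 0 ≤ σ)
    (h : ∀ l > 0, x ≤ c / l + l * σ ^ 2 / 2) : x ≤ σ * √(2 * c) := by
  -- Perturb `c` and `σ` to be positive so that the optimal `l = √(2c) / σ` exists, then let `ε → 0`.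
  have hpos : ∀ ε > 0, x ≤ (σ + ε) * √(2 * (c + ε)) := by
    intro ε hε
    set s := √(2 * (c + ε))
    have hs : 0 < s := sqrt_pos.2 (by positivity)
    have hs2 : s ^ 2 = 2 * (c + ε) := sq_sqrt (by positivity)
    have hσε : 0 < σ + ε := by positivity
    calc x ≤ c / (s / (σ + ε)) + s / (σ + ε) * σ ^ 2 / 2 := h _ (by positivity)
      _ ≤ (c + ε) / (s / (σ + ε)) + s / (σ + ε) * (σ + ε) ^ 2 / 2 := by gcongr <;> linarith
      _ = (σ + ε) * s := by field_simp; nlinarith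
  have hlim : Tendsto (fun ε => (σ + ε) * √(2 * (c + ε))) (𝓝[>] 0) (𝓝 (σ * √(2 * c))) := by
    have hcont : Continuous fun ε => (σ + ε) * √(2 * (c + ε)) := by fun_prop
    simpa using (hcont.tendsto 0).mono_left nhdsWithin_le_nhds
  exact ge_of_tendsto hlim (eventually_nhdsWithin_of_forall hpos)

theorem sum_sup'_div_card_le_of_sum_exp_le {Ω α : Type*} [Fintype Ω] [Nonempty Ω]
    (s : Finset α) (hs : s.Nonempty) (X : α → Ω → ℝ) {σ : ℝ} (hσ : 0 ≤ σ)
    (hX : ∀ a ∈ s, ∀ l > 0, ∑ ω, exp (l * X a ω) ≤ Fintype.card Ω * exp (l ^ 2 * σ ^ 2 / 2)) :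
    (∑ ω, s.sup' hs fun a => X a ω) / Fintype.card Ω ≤ σ * √(2 * log #s) := by
  have hs1 : (1 : ℝ) ≤ #s := by exact_mod_cast hs.card_pos
  refine le_mul_sqrt_of_forall_le_div_add (log_nonneg hs1) hσ fun l hl => ?_
  have hexp : exp (l * ((∑ ω, s.sup' hs fun a => X a ω) / Fintype.card Ω))
      ≤ exp (log #s + l ^ 2 * σ ^ 2 / 2) := calc
    _ = exp ((∑ ω, l * s.sup' hs fun a => X a ω) / Fintype.card Ω) := by
      rw [← mul_sum, mul_div_assoc]
    _ ≤ (∑ ω, exp (l * s.sup' hs fun a => X a ω)) / Fintype.card Ω := exp_sum_div_card_le _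
    _ ≤ (∑ ω, ∑ a ∈ s, exp (l * X a ω)) / Fintype.card Ω := by
      gcongr with ω; exact exp_mul_sup'_le_sum s hs _ l
    _ = (∑ a ∈ s, ∑ ω, exp (l * X a ω)) / Fintype.card Ω := by rw [sum_comm]
    _ ≤ (∑ _a ∈ s, Fintype.card Ω * exp (l ^ 2 * σ ^ 2 / 2)) / Fintype.card Ω := by
      gcongr with a ha; exact hX a ha l hl
    _ = exp (log #s + l ^ 2 * σ ^ 2 / 2) := by
      rw [sum_const, nsmul_eq_mul, exp_add, exp_log (by positivity)]; field_simp
  rw [exp_le_exp, ← le_div_iff₀' hl] at hexp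
  calc _ ≤ (log #s + l ^ 2 * σ ^ 2 / 2) / l := hexp
    _ = log #s / l + l * σ ^ 2 / 2 := by field_simp

/-- Massart's finite class lemma: if `A ⊆ ℝ^n` is finite with `|A| = K` and
`max_{a∈A} ‖a‖₂ ≤ R`, then `E_σ[max_{a∈A} ∑ᵢ σᵢ aᵢ] ≤ R √(2 log K)`, where the
`σᵢ` are i.i.d. uniform `±1` variables. -/
theorem massart_finite_class (n K : ℕ) (A : Finset (Fin n → ℝ)) (hA : A.Nonempty)
    (hK : A.card = K) (R : ℝ) (hR : ∀ a ∈ A, Real.sqrt (∑ i, (a i) ^ 2) ≤ R) :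
    (∑ σ : Fin n → Bool,
        A.sup' hA fun a => ∑ i, (if σ i then (1 : ℝ) else -1) * a i)
      / 2 ^ n ≤ R * Real.sqrt (2 * Real.log K) := by
  have hnorm : ∀ a ∈ A, 0 ≤ R ∧ ∑ i, a i ^ 2 ≤ R ^ 2 := fun a ha => sqrt_le_iff.1 (hR a ha)
  have hcard : ((Fintype.card (Fin n → Bool) : ℕ) : ℝ) = 2 ^ n := by simp
  rw [← hcard, ← hK]
  refine sum_sup'_div_card_le_of_sum_exp_le A hA _ (hnorm _ hA.choose_spec).1 fun a ha l hl => ?_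
  calc ∑ σ : Fin n → Bool, exp (l * ∑ i, (if σ i then (1 : ℝ) else -1) * a i)
      = ∑ σ : Fin n → Bool, exp (∑ i, (if σ i then (1 : ℝ) else -1) * (l * a i)) := by
        simp only [mul_sum, mul_left_comm]
    _ ≤ 2 ^ n * exp ((∑ i, (l * a i) ^ 2) / 2) := by
        simpa using sum_exp_sum_sign_mul_le fun i => l * a i
    _ ≤ Fintype.card (Fin n → Bool) * exp (l ^ 2 * R ^ 2 / 2) := by
        rw [hcard]
        gcongr
        simp only [mul_pow, ← mul_sum]
        gcongr
        exact (hnorm a ha).2
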